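/- Let B > 0, p ∈ ℝ, and let v : ℝ → ℝ be continuous and bounded. Let φ : ℝ → 𝓢(ℝ), λ ↦ φ_λ, be a differentiable map into the Schwartz space of real-valued functions, and let ε : ℝ → ℝ be such that for all λ, x ∈ ℝ: −φ_λ″(x) + (B²x² + λ·v(x − p/B)) φ_λ(x) = ε(λ) φ_λ(x), and ∫_ℝ φ_λ(x)² dx = 1 for all λ. Then ε is differentiable and for every λ ∈ ℝ its derivative is ε′(λ) = ∫_ℝ v(x − p/B) φ_λ(x)² dx. -/

import Mathlib

/-!
Pair the eigenvalue equations at `λ` and `λ + t` against the other eigenfunction and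
integrate: the harmonic potential cancels pointwise and the kinetic terms cancel because
`d²/dx²` is symmetric on `𝓢(ℝ)`, leaving
`(ε(λ + t) - ε(λ)) ⟨φ_λ, φ_{λ+t}⟩ = t ⟨v φ_λ, φ_{λ+t}⟩`.
Since `λ ↦ φ_λ` is continuous in `𝓢(ℝ)`, hence in sup norm, both pairings converge as
`t → 0`, the first one to `‖φ_λ‖² = 1`.
-/

open MeasureTheory SchwartzMap

def HasSchwartzDerivAt (φ : ℝ → SchwartzMap ℝ ℝ) (φ' : SchwartzMap ℝ ℝ)
    (l : ℝ) : Prop :=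
  Filter.Tendsto (fun h : ℝ => h⁻¹ • (φ (l + h) - φ l))
    (nhdsWithin (0 : ℝ) {(0 : ℝ)}ᶜ) (nhds φ')

open Filter Topology

section Pairing

variable {E : Type*} [NormedAddCommGroup E] [NormedSpace ℝ E] [MeasurableSpace E]
  {μ : Measure E} {w : E → ℝ}

theorem MeasureTheory.Integrable.mul_schwartzMap [OpensMeasurableSpace E]
    (hw : Integrable w μ) (g : 𝓢(E, ℝ)) : Integrable (fun x => w x * g x) μ :=
  hw.mul_bdd g.continuous.aestronglyMeasurable (.of_forall (norm_le_seminorm ℝ g))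

theorem SchwartzMap.norm_integral_mul_le (hw : Integrable w μ) (g : 𝓢(E, ℝ)) :
    ‖∫ x, w x * g x ∂μ‖ ≤ (∫ x, ‖w x‖ ∂μ) * SchwartzMap.seminorm ℝ 0 0 g := by
  rw [← integral_mul_const]
  refine norm_integral_le_of_norm_le (hw.norm.mul_const _) (.of_forall fun x => ?_)
  rw [norm_mul]
  exact mul_le_mul_of_nonneg_left (norm_le_seminorm ℝ g x) (norm_nonneg _)

theorem SchwartzMap.continuous_integral_mul [OpensMeasurableSpace E] (hw : Integrable w μ) :
    Continuous fun g : 𝓢(E, ℝ) => ∫ x, w x * g x ∂μ :=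
  (mkCLMtoNormedSpace (σ := RingHom.id ℝ) (fun g : 𝓢(E, ℝ) => ∫ x, w x * g x ∂μ)
    (fun f g => by
      simp only [add_apply, mul_add]
      exact integral_add (hw.mul_schwartzMap f) (hw.mul_schwartzMap g))
    (fun a g => by
      simp only [smul_apply, smul_eq_mul, mul_left_comm (w _), RingHom.id_apply]
      exact integral_const_mul a _)
    ⟨{(0, 0)}, ∫ x, ‖w x‖ ∂μ, integral_nonneg fun _ => norm_nonneg _, by
      simpa using norm_integral_mul_le hw⟩).continuous

end Pairing

namespace SchwartzMap

theorem derivCLM_derivCLM_eq {F : Type*} [NormedAddCommGroup F] [NormedSpace ℝ F]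
    (f : 𝓢(ℝ, F)) : ⇑(derivCLM ℝ F (derivCLM ℝ F f)) = deriv (deriv f) := by
  ext x
  rw [derivCLM_apply]
  exact congrArg (deriv · x) (funext (derivCLM_apply ℝ f))

variable {𝕜 : Type*} [NormedRing 𝕜] [NormedSpace ℝ 𝕜] [IsScalarTower ℝ 𝕜 𝕜] [SMulCommClass ℝ 𝕜 𝕜]

theorem integral_deriv_deriv_mul (f g : 𝓢(ℝ, 𝕜)) :
    ∫ x, deriv (deriv f) x * g x = ∫ x, f x * deriv (deriv g) x := by
  have hf : deriv f = derivCLM ℝ 𝕜 f := funext fun x => (derivCLM_apply ℝ f x).symm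
  have hg : deriv g = derivCLM ℝ 𝕜 g := funext fun x => (derivCLM_apply ℝ g x).symm
  rw [hf, hg]
  calc ∫ x, deriv (derivCLM ℝ 𝕜 f) x * g x
      = -∫ x, derivCLM ℝ 𝕜 f x * deriv g x := by
        rw [integral_mul_deriv_eq_neg_deriv_mul, neg_neg]
    _ = ∫ x, f x * deriv (derivCLM ℝ 𝕜 g) x := by
        rw [hg, integral_mul_deriv_eq_neg_deriv_mul, hf]

end SchwartzMap

theorem HasSchwartzDerivAt.tendsto_nhdsNE {φ : ℝ → 𝓢(ℝ, ℝ)} {ψ : 𝓢(ℝ, ℝ)} {l : ℝ}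
    (h : HasSchwartzDerivAt φ ψ l) : Tendsto (fun t => φ (l + t)) (𝓝[≠] 0) (𝓝 (φ l)) := by
  have hsmul : Tendsto (fun t : ℝ => t • (t⁻¹ • (φ (l + t) - φ l))) (𝓝[≠] 0) (𝓝 0) := by
    simpa using (tendsto_id.mono_left nhdsWithin_le_nhds).smul h
  have hdiff : Tendsto (fun t => φ (l + t) - φ l) (𝓝[≠] 0) (𝓝 0) :=
    hsmul.congr' <| eventually_nhdsWithin_of_forall fun t ht => smul_inv_smul₀ ht _
  simpa using hdiff.add_const (φ l)

theorem hasDerivAt_of_sub_mul_eq {e N I : ℝ → ℝ} {l n c : ℝ}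
    (hN : Tendsto N (𝓝[≠] 0) (𝓝 n)) (hn : n ≠ 0) (hI : Tendsto I (𝓝[≠] 0) (𝓝 c))
    (h : ∀ t, (e (l + t) - e l) * N t = t * I t) : HasDerivAt e (c / n) l := by
  rw [hasDerivAt_iff_tendsto_slope_zero]
  refine (hI.div hN hn).congr' ?_
  filter_upwards [hN.eventually_ne hn, self_mem_nhdsWithin] with t hNt ht
  rw [Pi.div_apply, smul_eq_mul, div_eq_iff hNt, mul_assoc, h, ← mul_assoc,
    inv_mul_cancel₀ ht, one_mul]

theorem eigenvalue_sub_mul_integral_mul (U V : ℝ → ℝ) (hV : AEStronglyMeasurable V) {C : ℝ}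
    (hC : ∀ x, ‖V x‖ ≤ C) {f g : 𝓢(ℝ, ℝ)} {a b ea eb : ℝ}
    (hf : ∀ x, -deriv (deriv f) x + (U x + a * V x) * f x = ea * f x)
    (hg : ∀ x, -deriv (deriv g) x + (U x + b * V x) * g x = eb * g x) :
    (ea - eb) * ∫ x, f x * g x = (a - b) * ∫ x, V x * f x * g x := by
  have hVf : Integrable (fun x => V x * f x) := f.integrable.bdd_mul hV (.of_forall hC)
  have hpt : ∀ x, (ea - eb) * (f x * g x) - (a - b) * (V x * f x * g x)
      = deriv (deriv g) x * f x - deriv (deriv f) x * g x := fun x => by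
    linear_combination f x * hg x - g x * hf x
  have hsum : ∫ x, ((ea - eb) * (f x * g x) - (a - b) * (V x * f x * g x)) = 0 := by
    have hf'' : Integrable (deriv (deriv f)) := by
      rw [← derivCLM_derivCLM_eq]; exact integrable _
    have hg'' : Integrable (deriv (deriv g)) := by
      rw [← derivCLM_derivCLM_eq]; exact integrable _
    simp_rw [hpt]
    rw [integral_sub (hg''.mul_schwartzMap f) (hf''.mul_schwartzMap g),
      integral_deriv_deriv_mul, sub_eq_zero]
    simp_rw [mul_comm]
  rwa [integral_sub ((f.integrable.mul_schwartzMap g).const_mul _)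
    ((hVf.mul_schwartzMap g).const_mul _), integral_const_mul, integral_const_mul,
    sub_eq_zero] at hsum

theorem feynman_hellmann_coupling_general
    (B p : ℝ)
    (v : ℝ → ℝ) (hv : Continuous v)
    (hvb : ∃ C : ℝ, ∀ x, |v x| ≤ C)
    (φ : ℝ → SchwartzMap ℝ ℝ)
    (hφdiff : ∀ l : ℝ, ∃ ψ : SchwartzMap ℝ ℝ, HasSchwartzDerivAt φ ψ l)
    (ε : ℝ → ℝ)
    (heigen : ∀ l x : ℝ,
      -(deriv (deriv (φ l)) x) + (B ^ 2 * x ^ 2 + l * v (x - p / B)) * φ l x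
        = ε l * φ l x)
    (hnorm : ∀ l : ℝ, (∫ x : ℝ, (φ l x) ^ 2) = 1) :
    ∀ l : ℝ,
      HasDerivAt ε (∫ x : ℝ, v (x - p / B) * (φ l x) ^ 2) l := by
  intro l
  obtain ⟨C, hC⟩ := hvb
  have hVm : AEStronglyMeasurable fun x => v (x - p / B) :=
    (hv.comp (continuous_sub_right _)).aestronglyMeasurable
  have hVφ : Integrable fun x => v (x - p / B) * φ l x :=
    (φ l).integrable.bdd_mul hVm (.of_forall fun x => hC _)
  obtain ⟨ψ, hψ⟩ := hφdiff l
  have hN : Tendsto (fun t => ∫ x, φ l x * φ (l + t) x) (𝓝[≠] 0) (𝓝 1) := by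
    simpa [Function.comp_def, ← sq, hnorm] using
      ((continuous_integral_mul (μ := volume) (φ l).integrable).tendsto (φ l)).comp
        hψ.tendsto_nhdsNE
  have hI : Tendsto (fun t => ∫ x, v (x - p / B) * φ l x * φ (l + t) x) (𝓝[≠] 0)
      (𝓝 (∫ x, v (x - p / B) * φ l x ^ 2)) := by
    simpa [Function.comp_def, mul_assoc, ← sq] using
      ((continuous_integral_mul hVφ).tendsto (φ l)).comp hψ.tendsto_nhdsNE
  simpa using hasDerivAt_of_sub_mul_eq hN one_ne_zero hI fun t => by
    have := eigenvalue_sub_mul_integral_mul (fun x => B ^ 2 * x ^ 2) (fun x => v (x - p / B))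
      hVm (fun x => hC _) (heigen l) (heigen (l + t))
    linear_combination -this

/-- Feynman–Hellmann formula in the coupling constant: with
`B > 0`, `p ∈ ℝ`, `v` continuous and bounded, and a differentiable family
`λ ↦ φ_λ ∈ 𝓢(ℝ)` of normalized real eigenfunctions of
`−d²/dx² + B²x² + λ·v(x − p/B)` with eigenvalue `ε(λ)`, the eigenvalue curve is
differentiable with `ε'(λ) = ∫ v(x − p/B) φ_λ(x)² dx`. -/
theorem feynman_hellmann_coupling
    (B p : ℝ) (hB : 0 < B)
    (v : ℝ → ℝ) (hv : Continuous v)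
    (hvb : ∃ C : ℝ, ∀ x, |v x| ≤ C)
    (φ : ℝ → SchwartzMap ℝ ℝ)
    (hφdiff : ∀ l : ℝ, ∃ ψ : SchwartzMap ℝ ℝ, HasSchwartzDerivAt φ ψ l)
    (ε : ℝ → ℝ)
    (heigen : ∀ l x : ℝ,
      -(deriv (deriv (φ l)) x) + (B ^ 2 * x ^ 2 + l * v (x - p / B)) * φ l x
        = ε l * φ l x)
    (hnorm : ∀ l : ℝ, (∫ x : ℝ, (φ l x) ^ 2) = 1) :
    ∀ l : ℝ,
      HasDerivAt ε (∫ x : ℝ, v (x - p / B) * (φ l x) ^ 2) l :=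
  feynman_hellmann_coupling_general B p v hv hvb φ hφdiff ε heigen hnorm
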